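/- arXiv:1211.5265 — 5 statements merged into one kernel-verified Lean document; each statement's English description precedes it below -/
import Mathlib

section
/- For any two sequences of positive reals (μ_i) and (ν_i), if B := sup_{k≥1} (∑_{j≥k} μ_j)(∑_{i=1}^k 1/ν_i) is finite, then for every real sequence (f_i) one has ∑_{i=1}^∞ μ_i (∑_{j=1}^i f_j)^2 ≤ 4B ∑_{i=1}^∞ ν_i f_i^2. -/
/-!
With `G k = ∑_{i ≤ k} 1/ν_i` and the tails `T k = ∑_{l ≥ k} μ_l`, Cauchy–Schwarz with the weights
`ν_j √(G j)` gives `(∑_{j ≤ i} f_j)² ≤ 2 √(G i) ∑_{j ≤ i} ν_j f_j² √(G j)`, because the dual weights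
`(1/ν_j) / √(G j)` telescope to at most `2 √(G i)`. Summing against `μ_i` and exchanging the order
of summation leaves `∑_{i ≥ j} μ_i √(G i)`, which the hypothesis `T i · G i ≤ B` bounds by
`√B ∑_{i ≥ j} μ_i / √(T i) ≤ 2 √B √(T j) ≤ 2 B / √(G j)`, the same telescoping run backwards.
Working with finite sections `i < N` (and tails truncated at `N`) avoids any summability issue.
-/

open Finset Real

theorem sub_div_sqrt_le_two_mul_sqrt_sub {a b : ℝ} (hb : 0 ≤ b) (hba : b ≤ a) :
    (a - b) / √a ≤ 2 * (√a - √b) := by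
  rcases (hb.trans hba).eq_or_lt with rfl | ha
  · obtain rfl : b = 0 := le_antisymm hba hb
    simp
  rw [div_le_iff₀ (sqrt_pos.2 ha)]
  nlinarith [sq_sqrt ha.le, sq_sqrt hb, sqrt_le_sqrt hba, sqrt_nonneg b]

theorem sum_range_div_sqrt_sum_range_le {d : ℕ → ℝ} (hd : ∀ i, 0 ≤ d i) (n : ℕ) :
    ∑ i ∈ range n, d i / √(∑ j ∈ range (i + 1), d j) ≤ 2 * √(∑ i ∈ range n, d i) := by
  induction n with
  | zero => simp
  | succ n ih =>
    have hstep : d n / √(∑ j ∈ range (n + 1), d j) ≤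
        2 * (√(∑ j ∈ range (n + 1), d j) - √(∑ j ∈ range n, d j)) := by
      convert sub_div_sqrt_le_two_mul_sqrt_sub (sum_nonneg fun i _ => hd i)
        (sum_le_sum_of_subset_of_nonneg (range_subset_range.2 n.le_succ) fun i _ _ => hd i)
        using 2
      rw [sum_range_succ]
      ring
    rw [sum_range_succ]
    linarith

theorem sum_Ico_div_sqrt_sum_Ico_le {d : ℕ → ℝ} (hd : ∀ i, 0 ≤ d i) (j N : ℕ) :
    ∑ i ∈ Ico j N, d i / √(∑ l ∈ Ico i N, d l) ≤ 2 * √(∑ l ∈ Ico j N, d l) := by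
  induction h : N - j generalizing j with
  | zero => simp [Ico_eq_empty_of_le (by omega : N ≤ j)]
  | succ k ih =>
    have hjN : j < N := by omega
    have hstep : d j / √(∑ l ∈ Ico j N, d l) ≤
        2 * (√(∑ l ∈ Ico j N, d l) - √(∑ l ∈ Ico (j + 1) N, d l)) := by
      convert sub_div_sqrt_le_two_mul_sqrt_sub (sum_nonneg fun i _ => hd i)
        (sum_le_sum_of_subset_of_nonneg (Ico_subset_Ico_left j.le_succ) fun i _ _ => hd i)
        using 2
      rw [sum_eq_sum_Ico_succ_bot hjN]
      ring
    rw [sum_eq_sum_Ico_succ_bot hjN]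
    linarith [ih (j + 1) (by omega)]

section Hardy

variable {μ ν : ℕ → ℝ}

theorem sqrt_sum_range_inv_pos (hν : ∀ i, 0 < ν i) (k : ℕ) :
    0 < √(∑ i ∈ range (k + 1), 1 / ν i) :=
  sqrt_pos.2 (sum_pos (fun i _ => one_div_pos.2 (hν i)) nonempty_range_add_one)

theorem sq_sum_range_le (hν : ∀ i, 0 < ν i) (f : ℕ → ℝ) (n : ℕ) :
    (∑ j ∈ range n, f j) ^ 2 ≤
      (∑ j ∈ range n, ν j * f j ^ 2 * √(∑ l ∈ range (j + 1), 1 / ν l)) *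
        (2 * √(∑ j ∈ range n, 1 / ν j)) := by
  have hG := sqrt_sum_range_inv_pos hν
  calc (∑ j ∈ range n, f j) ^ 2
      ≤ (∑ j ∈ range n, ν j * f j ^ 2 * √(∑ l ∈ range (j + 1), 1 / ν l)) *
          ∑ j ∈ range n, 1 / ν j / √(∑ l ∈ range (j + 1), 1 / ν l) := by
        refine sum_sq_le_sum_mul_sum_of_sq_le_mul _ (fun j _ => ?_) (fun j _ => ?_)
          (fun j _ => le_of_eq ?_)
        · have := hν j; have := hG j; positivity
        · have := hν j; have := hG j; positivity
        · field_simp [(hν j).ne']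
          exact (mul_div_cancel_right₀ _ (hG j).ne').symm
    _ ≤ _ := by
        gcongr
        · exact sum_nonneg fun j _ => by have := hν j; have := hG j; positivity
        · exact sum_range_div_sqrt_sum_range_le (fun j => (one_div_pos.2 (hν j)).le) n

theorem sum_Ico_mul_sqrt_sum_range_inv_le (hμ : ∀ i, 0 ≤ μ i) (hν : ∀ i, 0 < ν i) {B : ℝ}
    {j N : ℕ} (hjN : j < N)
    (hB : ∀ k ∈ Ico j N, (∑ l ∈ Ico k N, μ l) * ∑ i ∈ range (k + 1), 1 / ν i ≤ B) :
    ∑ i ∈ Ico j N, μ i * √(∑ l ∈ range (i + 1), 1 / ν l) ≤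
      2 * B / √(∑ l ∈ range (j + 1), 1 / ν l) := by
  have hG := sqrt_sum_range_inv_pos hν
  have hjmem : j ∈ Ico j N := left_mem_Ico.2 hjN
  have hB0 : 0 ≤ B := (mul_nonneg (sum_nonneg fun l _ => hμ l)
    (sum_nonneg fun i _ => (one_div_pos.2 (hν i)).le)).trans (hB j hjmem)
  have hterm : ∀ i ∈ Ico j N, μ i * √(∑ l ∈ range (i + 1), 1 / ν l) ≤
      √B * (μ i / √(∑ l ∈ Ico i N, μ l)) := by
    intro i hi
    rcases (hμ i).eq_or_lt with hμi | hμi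
    · simp [← hμi]
    have hT : 0 < √(∑ l ∈ Ico i N, μ l) := sqrt_pos.2 <| hμi.trans_le <|
      single_le_sum (fun l _ => hμ l) (left_mem_Ico.2 (mem_Ico.1 hi).2)
    rw [mul_div_left_comm, mul_le_mul_iff_right₀ hμi, le_div_iff₀ hT,
      ← sqrt_mul' _ (sum_nonneg fun l _ => hμ l)]
    exact sqrt_le_sqrt ((mul_comm _ _).trans_le (hB i hi))
  have hTj : √(∑ l ∈ Ico j N, μ l) ≤ √B / √(∑ l ∈ range (j + 1), 1 / ν l) := by
    rw [le_div_iff₀ (hG j), ← sqrt_mul (sum_nonneg fun l _ => hμ l)]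
    exact sqrt_le_sqrt (hB j hjmem)
  calc ∑ i ∈ Ico j N, μ i * √(∑ l ∈ range (i + 1), 1 / ν l)
      ≤ √B * ∑ i ∈ Ico j N, μ i / √(∑ l ∈ Ico i N, μ l) := by
        rw [mul_sum]
        exact sum_le_sum hterm
    _ ≤ √B * (2 * (√B / √(∑ l ∈ range (j + 1), 1 / ν l))) := by
        gcongr
        exact (sum_Ico_div_sqrt_sum_Ico_le hμ j N).trans (by gcongr)
    _ = 2 * (√B * √B) / √(∑ l ∈ range (j + 1), 1 / ν l) := by ring
    _ = 2 * B / √(∑ l ∈ range (j + 1), 1 / ν l) := by rw [mul_self_sqrt hB0]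

theorem hardy_inequality_range (hμ : ∀ i, 0 ≤ μ i) (hν : ∀ i, 0 < ν i) {B : ℝ} {N : ℕ}
    (hB : ∀ k < N, (∑ l ∈ Ico k N, μ l) * ∑ i ∈ range (k + 1), 1 / ν i ≤ B) (f : ℕ → ℝ) :
    ∑ i ∈ range N, μ i * (∑ j ∈ range (i + 1), f j) ^ 2 ≤
      4 * B * ∑ i ∈ range N, ν i * f i ^ 2 := by
  set G : ℕ → ℝ := fun k => √(∑ i ∈ range (k + 1), 1 / ν i)
  have hG : ∀ k, 0 < G k := sqrt_sum_range_inv_pos hν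
  have ha : ∀ j, 0 ≤ 2 * (ν j * f j ^ 2 * G j) := fun j => by
    have := hν j; have := hG j; positivity
  calc ∑ i ∈ range N, μ i * (∑ j ∈ range (i + 1), f j) ^ 2
      ≤ ∑ i ∈ range N, μ i * ((∑ j ∈ range (i + 1), ν j * f j ^ 2 * G j) * (2 * G i)) := by
        gcongr with i
        · exact hμ i
        · exact sq_sum_range_le hν f (i + 1)
    _ = ∑ i ∈ range N, ∑ j ∈ range (i + 1), 2 * (ν j * f j ^ 2 * G j) * (μ i * G i) :=
        sum_congr rfl fun i _ => by rw [← sum_mul, ← mul_sum]; ring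
    _ = ∑ j ∈ range N, ∑ i ∈ Ico j N, 2 * (ν j * f j ^ 2 * G j) * (μ i * G i) :=
        sum_comm' fun i j => by simp only [mem_range, mem_Ico]; omega
    _ = ∑ j ∈ range N, 2 * (ν j * f j ^ 2 * G j) * ∑ i ∈ Ico j N, μ i * G i :=
        sum_congr rfl fun j _ => (mul_sum _ _ _).symm
    _ ≤ ∑ j ∈ range N, 2 * (ν j * f j ^ 2 * G j) * (2 * B / G j) := by
        gcongr with j hj
        · exact ha j
        · exact sum_Ico_mul_sqrt_sum_range_inv_le hμ hν (mem_range.1 hj)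
            fun k hk => hB k (mem_Ico.1 hk).2
    _ = 4 * B * ∑ i ∈ range N, ν i * f i ^ 2 := by
        rw [mul_sum]
        exact sum_congr rfl fun j _ => by field_simp [(hG j).ne']; ring

theorem sum_Ico_mul_sum_range_inv_le_of_tsum (hμ : ∀ i, 0 < μ i) (hν : ∀ i, 0 < ν i) {B : ℝ}
    (hB : ∀ k : ℕ, (∑' j : ℕ, ENNReal.ofReal (μ (k + j))) *
        ENNReal.ofReal (∑ i ∈ range (k + 1), 1 / ν i) ≤ ENNReal.ofReal B)
    {k N : ℕ} (hkN : k < N) :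
    (∑ l ∈ Ico k N, μ l) * ∑ i ∈ range (k + 1), 1 / ν i ≤ B := by
  have hT : 0 < ∑ l ∈ Ico k N, μ l :=
    sum_pos (fun l _ => hμ l) (nonempty_Ico.2 hkN)
  have hG : 0 < ∑ i ∈ range (k + 1), 1 / ν i :=
    sum_pos (fun i _ => one_div_pos.2 (hν i)) nonempty_range_add_one
  have hTail : ENNReal.ofReal (∑ l ∈ Ico k N, μ l) ≤ ∑' j : ℕ, ENNReal.ofReal (μ (k + j)) := by
    rw [sum_Ico_eq_sum_range, ENNReal.ofReal_sum_of_nonneg fun j _ => (hμ _).le]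
    exact ENNReal.sum_le_tsum _
  have h := (ENNReal.ofReal_mul hT.le).trans_le ((mul_le_mul_left hTail _).trans (hB k))
  exact (ENNReal.ofReal_le_ofReal_iff'.1 h).resolve_right (mul_pos hT hG).not_ge

end Hardy

-- Index `n` of the sequences corresponds to the paper's index `i = n + 1`.
/-- Discrete Hardy inequality (sufficiency direction): if
`B := sup_{k≥1} (∑_{j≥k} μ_j)(∑_{i=1}^k 1/ν_i)` is finite (here: bounded by `B`),
then `∑ μ_i (∑_{j≤i} f_j)^2 ≤ 4B ∑ ν_i f_i^2` for every real sequence `f`.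
Sequences are indexed by `ℕ`, where index `n` corresponds to the paper's `i = n+1`.
Sums are taken in `ℝ≥0∞` so that either side may be infinite. -/
theorem stmt_0 (μ ν : ℕ → ℝ) (hμ : ∀ i, 0 < μ i) (hν : ∀ i, 0 < ν i)
    (B : ℝ)
    (hB : ∀ k : ℕ,
      (∑' j : ℕ, ENNReal.ofReal (μ (k + j))) *
        ENNReal.ofReal (∑ i ∈ Finset.range (k + 1), 1 / ν i) ≤ ENNReal.ofReal B) :
    ∀ f : ℕ → ℝ,
      ∑' i : ℕ, ENNReal.ofReal (μ i * (∑ j ∈ Finset.range (i + 1), f j) ^ 2) ≤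
        ENNReal.ofReal (4 * B) * ∑' i : ℕ, ENNReal.ofReal (ν i * f i ^ 2) := by
  intro f
  refine ENNReal.tsum_le_of_sum_range_le fun N => ?_
  have hνf : 0 ≤ ∑ i ∈ range N, ν i * f i ^ 2 :=
    sum_nonneg fun i _ => mul_nonneg (hν i).le (sq_nonneg _)
  calc ∑ i ∈ range N, ENNReal.ofReal (μ i * (∑ j ∈ range (i + 1), f j) ^ 2)
      = ENNReal.ofReal (∑ i ∈ range N, μ i * (∑ j ∈ range (i + 1), f j) ^ 2) :=
        (ENNReal.ofReal_sum_of_nonneg fun i _ => mul_nonneg (hμ i).le (sq_nonneg _)).symm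
    _ ≤ ENNReal.ofReal (4 * B * ∑ i ∈ range N, ν i * f i ^ 2) :=
        ENNReal.ofReal_le_ofReal <| hardy_inequality_range (fun i => (hμ i).le) hν
          (fun k hk => sum_Ico_mul_sum_range_inv_le_of_tsum hμ hν hB hk) f
    _ = ENNReal.ofReal (4 * B) * ENNReal.ofReal (∑ i ∈ range N, ν i * f i ^ 2) :=
        ENNReal.ofReal_mul' hνf
    _ ≤ ENNReal.ofReal (4 * B) * ∑' i, ENNReal.ofReal (ν i * f i ^ 2) := by
        rw [ENNReal.ofReal_sum_of_nonneg fun i _ => mul_nonneg (hν i).le (sq_nonneg _)]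
        gcongr
        exact ENNReal.sum_le_tsum _
end

section
/- For any two sequences of positive reals (μ_i) and (ν_i), if there exists a finite constant A ≥ 0 such that ∑_{i=1}^∞ μ_i (∑_{j=1}^i f_j)^2 ≤ A ∑_{i=1}^∞ ν_i f_i^2 for every real sequence (f_i), then B := sup_{k≥1} (∑_{j≥k} μ_j)(∑_{i=1}^k 1/ν_i) is finite and B ≤ A. -/
/-!
Test the Hardy inequality on `f = 1/ν` restricted to `{0, …, k}`. Its partial sums are constantly
`S = ∑_{i ≤ k} 1/ν_i` from index `k` on, so the left side is at least `(∑_{j ≥ k} μ_j) S²`, while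
the right side is exactly `A S`; dividing by `S > 0` gives the bound.
-/

open Finset ENNReal

lemma sum_range_indicator_range_of_le {M : Type*} [AddCommMonoid M] (g : ℕ → M) {k i : ℕ}
    (hki : k ≤ i) :
    ∑ j ∈ range (i + 1), (↑(range (k + 1)) : Set ℕ).indicator g j = ∑ j ∈ range (k + 1), g j :=
  sum_indicator_subset g (range_subset_range.2 (by omega))

lemma tsum_ofReal_mul_sq_indicator_one_div (ν : ℕ → ℝ) (hν : ∀ i, 0 < ν i) (s : Finset ℕ) :
    ∑' i, ENNReal.ofReal (ν i * (↑s : Set ℕ).indicator (fun i => 1 / ν i) i ^ 2) =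
      ENNReal.ofReal (∑ i ∈ s, 1 / ν i) := by
  rw [ofReal_sum_of_nonneg (fun i _ => (one_div_pos.2 (hν i)).le), sum_eq_tsum_indicator]
  refine tsum_congr fun i => ?_
  by_cases hi : i ∈ s
  · have := (hν i).ne'
    simp only [Set.indicator_of_mem (mem_coe.2 hi)]
    field_simp
  · simp [hi]

lemma tsum_tail_mul_sq_le_of_eq_of_le (μ F : ℕ → ℝ) {k : ℕ} {c : ℝ}
    (hF : ∀ i, k ≤ i → F i = c) :
    (∑' j, ENNReal.ofReal (μ (k + j))) * ENNReal.ofReal (c ^ 2) ≤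
      ∑' i, ENNReal.ofReal (μ i * F i ^ 2) := by
  rw [← ENNReal.tsum_mul_right]
  calc ∑' j, ENNReal.ofReal (μ (k + j)) * ENNReal.ofReal (c ^ 2)
      = ∑' j, ENNReal.ofReal (μ (k + j) * F (k + j) ^ 2) := tsum_congr fun j => by
        rw [hF _ (k.le_add_right j), ofReal_mul' (sq_nonneg c)]
    _ ≤ ∑' i, ENNReal.ofReal (μ i * F i ^ 2) :=
        ENNReal.tsum_comp_le_tsum_of_injective (add_right_injective k) _

theorem stmt_1_general (μ ν : ℕ → ℝ) (hν : ∀ i, 0 < ν i)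
    (A : ℝ)
    (hHardy : ∀ f : ℕ → ℝ,
      ∑' i : ℕ, ENNReal.ofReal (μ i * (∑ j ∈ Finset.range (i + 1), f j) ^ 2) ≤
        ENNReal.ofReal A * ∑' i : ℕ, ENNReal.ofReal (ν i * f i ^ 2)) :
    ∀ k : ℕ,
      (∑' j : ℕ, ENNReal.ofReal (μ (k + j))) *
        ENNReal.ofReal (∑ i ∈ Finset.range (k + 1), 1 / ν i) ≤ ENNReal.ofReal A := by
  intro k
  set S := ∑ i ∈ range (k + 1), 1 / ν i
  have hS : 0 < S := sum_pos (fun i _ => one_div_pos.2 (hν i)) (nonempty_range_iff.2 k.succ_ne_zero)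
  set f := (↑(range (k + 1)) : Set ℕ).indicator fun i => 1 / ν i
  have key := (tsum_tail_mul_sq_le_of_eq_of_le μ (fun i => ∑ j ∈ range (i + 1), f j)
    fun _ hi => sum_range_indicator_range_of_le _ hi).trans (hHardy f)
  rw [tsum_ofReal_mul_sq_indicator_one_div ν hν, sq, ofReal_mul hS.le, ← mul_assoc] at key
  exact (ENNReal.mul_le_mul_iff_left (ofReal_pos.2 hS).ne' ofReal_ne_top).mp key

/-- Discrete Hardy inequality (necessity direction): if the Hardy inequality holds
with a finite constant `A ≥ 0` for every real sequence `f`, then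
`B := sup_{k≥1} (∑_{j≥k} μ_j)(∑_{i=1}^k 1/ν_i)` is finite and `B ≤ A`.
Sequences are indexed by `ℕ`, where index `n` corresponds to the paper's `i = n+1`.
Sums are taken in `ℝ≥0∞`. -/
theorem stmt_1 (μ ν : ℕ → ℝ) (hμ : ∀ i, 0 < μ i) (hν : ∀ i, 0 < ν i)
    (A : ℝ) (hA : 0 ≤ A)
    (hHardy : ∀ f : ℕ → ℝ,
      ∑' i : ℕ, ENNReal.ofReal (μ i * (∑ j ∈ Finset.range (i + 1), f j) ^ 2) ≤
        ENNReal.ofReal A * ∑' i : ℕ, ENNReal.ofReal (ν i * f i ^ 2)) :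
    ∀ k : ℕ,
      (∑' j : ℕ, ENNReal.ofReal (μ (k + j))) *
        ENNReal.ofReal (∑ i ∈ Finset.range (k + 1), 1 / ν i) ≤ ENNReal.ofReal A :=
  stmt_1_general μ ν hν A hHardy
end

section
/- Let (Q_i), (a_i) be positive sequences and 0 < z < z_s with Q_{i+1}/Q_i → 1/z_s, a_{i+1}/a_i → 1, and inf_i a_i > 0. Set 𝒬_i = Q_i z^i. Then B := sup_{k≥1} (∑_{j=k+1}^∞ 𝒬_j)(∑_{j=1}^k 1/(a_j 𝒬_j)) is finite. -/
/-!
Past some index the weights `𝒬_j = Q_j z^j` decay geometrically with ratio `ρ < 1`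
(since `𝒬_{j+1}/𝒬_j → z/z_s < 1`), and the reciprocals `c_j = 1/(a_j 𝒬_j)` grow geometrically
with ratio `1/ρ`. Hence the tail `∑_{j>k} 𝒬_j` is `O(𝒬_k)` and the partial sum `∑_{j≤k} c_j`
is a constant plus `O(c_k)`, so their product is `O(𝒬_k + 𝒬_k c_k) = O(1 + 1/a_k)`, which is bounded
because `a` is bounded below.
-/

open Filter Finset Topology

section RatioBounds

variable {f : ℕ → ℝ} {ρ : ℝ} {n : ℕ}

lemma eventually_le_mul_of_tendsto_ratio {r : ℝ} (hf : ∀ j, 0 < f j)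
    (hlim : Tendsto (fun j => f (j + 1) / f j) atTop (𝓝 r)) (hrρ : r < ρ) :
    ∀ᶠ j in atTop, f (j + 1) ≤ ρ * f j :=
  (hlim.eventually_lt_const hrρ).mono fun j hj => (div_le_iff₀ (hf j)).1 hj.le

lemma le_pow_mul_of_ratio_le (hρ : 0 ≤ ρ) (h : ∀ j ≥ n, f (j + 1) ≤ ρ * f j) {k : ℕ}
    (hk : n ≤ k) : ∀ m, f (k + m) ≤ ρ ^ m * f k
  | 0 => by simp
  | m + 1 =>
    calc f (k + (m + 1)) ≤ ρ * f (k + m) := h (k + m) (by omega)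
      _ ≤ ρ * (ρ ^ m * f k) := by gcongr; exact le_pow_mul_of_ratio_le hρ h hk m
      _ = ρ ^ (m + 1) * f k := by ring

lemma tsum_tail_le_of_ratio_le (hf : ∀ j, 0 ≤ f j) (hρ₀ : 0 ≤ ρ) (hρ₁ : ρ < 1)
    (h : ∀ j ≥ n, f (j + 1) ≤ ρ * f j) {k : ℕ} (hk : n ≤ k) :
    ∑' j, f (k + 1 + j) ≤ ρ / (1 - ρ) * f k := by
  have hterm : ∀ j, f (k + 1 + j) ≤ ρ ^ (j + 1) * f k := fun j => by
    rw [add_assoc, add_comm 1 j]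
    exact le_pow_mul_of_ratio_le hρ₀ h hk (j + 1)
  have hgeom : HasSum (fun j => ρ ^ (j + 1) * f k) (ρ / (1 - ρ) * f k) := by
    have := (hasSum_geometric_of_lt_one hρ₀ hρ₁).mul_left (ρ * f k)
    rw [show ρ / (1 - ρ) * f k = ρ * f k * (1 - ρ)⁻¹ by ring]
    rwa [show (fun j => ρ ^ (j + 1) * f k) = fun j => ρ * f k * ρ ^ j from
      funext fun j => by ring]
  have hsummable : Summable fun j => f (k + 1 + j) :=
    hgeom.summable.of_nonneg_of_le (fun j => hf _) hterm
  exact hasSum_le hterm hsummable.hasSum hgeom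

lemma sum_Icc_le_of_ratio_le (hf : ∀ j, 0 ≤ f j) (hρ : ρ < 1)
    (h : ∀ j ≥ n, f j ≤ ρ * f (j + 1)) {m k : ℕ} (hmn : m ≤ n) (hk : n ≤ k) :
    ∑ j ∈ Icc m k, f j ≤ ∑ j ∈ Icc m n, f j + f k / (1 - ρ) := by
  have hρ' : 0 < 1 - ρ := sub_pos.2 hρ
  induction k, hk using Nat.le_induction with
  | base => linarith [div_nonneg (hf n) hρ'.le]
  | succ k hk ih =>
    rw [sum_Icc_succ_top (by omega)]
    have hstep : f k / (1 - ρ) + f (k + 1) ≤ f (k + 1) / (1 - ρ) := by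
      rw [div_add' _ _ _ hρ'.ne', div_le_div_iff_of_pos_right hρ']
      linarith [h k hk]
    linarith

end RatioBounds

lemma exists_tsum_tail_mul_sum_Icc_le {q c : ℕ → ℝ} {ρ M : ℝ} (hq : ∀ j, 0 ≤ q j)
    (hc : ∀ j, 0 ≤ c j) (hρ₀ : 0 ≤ ρ) (hρ₁ : ρ < 1)
    (hqρ : ∀ᶠ j in atTop, q (j + 1) ≤ ρ * q j) (hcρ : ∀ᶠ j in atTop, c j ≤ ρ * c (j + 1))
    (hqc : ∀ j, q j * c j ≤ M) :
    ∃ B, ∀ k, (∑' j, q (k + 1 + j)) * ∑ j ∈ Icc 1 k, c j ≤ B := by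
  obtain ⟨N, hN⟩ := eventually_atTop.1 ((hqρ.and hcρ).and (eventually_ge_atTop 1))
  have hqN : ∀ k ≥ N, q k ≤ q N := fun k hk => by
    obtain ⟨m, rfl⟩ := Nat.exists_eq_add_of_le hk
    calc q (N + m) ≤ ρ ^ m * q N := le_pow_mul_of_ratio_le hρ₀ (fun j hj => (hN j hj).1.1) le_rfl m
      _ ≤ q N := mul_le_of_le_one_left (hq N) (pow_le_one₀ hρ₀ hρ₁.le)
  set S₀ := ∑ j ∈ Icc 1 N, c j
  have hbound : ∀ᶠ k in atTop, (∑' j, q (k + 1 + j)) * ∑ j ∈ Icc 1 k, c j ≤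
      ρ / (1 - ρ) * (q N * S₀ + M / (1 - ρ)) := by
    filter_upwards [eventually_ge_atTop N] with k hk
    have htail := tsum_tail_le_of_ratio_le hq hρ₀ hρ₁ (fun j hj => (hN j hj).1.1) hk
    have hsum := sum_Icc_le_of_ratio_le hc hρ₁ (fun j hj => (hN j hj).1.2) (hN N le_rfl).2 hk
    calc (∑' j, q (k + 1 + j)) * ∑ j ∈ Icc 1 k, c j
        ≤ (ρ / (1 - ρ) * q k) * (S₀ + c k / (1 - ρ)) :=
          mul_le_mul htail hsum (sum_nonneg fun j _ => hc j) (by have := hq k; positivity)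
      _ = ρ / (1 - ρ) * (q k * S₀ + q k * c k / (1 - ρ)) := by ring
      _ ≤ ρ / (1 - ρ) * (q N * S₀ + M / (1 - ρ)) := by
          have := hqN k hk
          have := hqc k
          have : 0 ≤ S₀ := sum_nonneg fun j _ => hc j
          gcongr
  obtain ⟨B, hB⟩ := (isBoundedUnder_of_eventually_le hbound).bddAbove_range
  exact ⟨B, fun k => hB ⟨k, rfl⟩⟩

/-- Finiteness of the Hardy constant `B` in the strictly subcritical regime: if
`Q_{i+1}/Q_i → 1/z_s`, `a_{i+1}/a_i → 1`, `inf a_i > 0` and `0 < z < z_s`, then with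
`𝒬_i = Q_i z^i`, `B := sup_{k≥1} (∑_{j=k+1}^∞ 𝒬_j)(∑_{j=1}^k 1/(a_j 𝒬_j))` is finite. -/
theorem stmt_12 (Q a : ℕ → ℝ) (hQ : ∀ i, 0 < Q i) (ha : ∀ i, 0 < a i)
    (z zs : ℝ) (hz : 0 < z) (hzzs : z < zs)
    (hQlim : Filter.Tendsto (fun i : ℕ => Q (i + 1) / Q i) Filter.atTop (nhds (1 / zs)))
    (halim : Filter.Tendsto (fun i : ℕ => a (i + 1) / a i) Filter.atTop (nhds 1))
    (hainf : ∃ a₀ : ℝ, 0 < a₀ ∧ ∀ i, a₀ ≤ a i) :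
    ∃ B : ℝ, ∀ k : ℕ, 1 ≤ k →
      (∑' j : ℕ, Q (k + 1 + j) * z ^ (k + 1 + j)) *
        (∑ j ∈ Finset.Icc 1 k, 1 / (a j * (Q j * z ^ j))) ≤ B := by
  obtain ⟨a₀, ha₀, ha₀_le⟩ := hainf
  set q : ℕ → ℝ := fun j => Q j * z ^ j
  have hq : ∀ j, 0 < q j := fun j => mul_pos (hQ j) (pow_pos hz j)
  have haq : ∀ j, 0 < a j * q j := fun j => mul_pos (ha j) (hq j)
  have hq_ratio : Tendsto (fun j => q (j + 1) / q j) atTop (𝓝 (z / zs)) := by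
    convert hQlim.mul_const z using 1
    · ext j
      simp only [q, pow_succ]
      field_simp [(hQ j).ne', hz.ne']
    · rw [one_div_mul_eq_div]
  have haq_ratio : Tendsto (fun j => a (j + 1) * q (j + 1) / (a j * q j)) atTop (𝓝 (z / zs)) := by
    simpa only [one_mul, div_mul_div_comm] using halim.mul hq_ratio
  obtain ⟨ρ, hzρ, hρ₁⟩ := exists_between ((div_lt_one (hz.trans hzzs)).2 hzzs)
  have hcρ : ∀ᶠ j in atTop, 1 / (a j * q j) ≤ ρ * (1 / (a (j + 1) * q (j + 1))) :=
    (eventually_le_mul_of_tendsto_ratio haq haq_ratio hzρ).mono fun j hj => by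
      rw [mul_one_div, div_le_div_iff₀ (haq j) (haq (j + 1)), one_mul]
      linarith
  have hqc : ∀ j, q j * (1 / (a j * q j)) ≤ a₀⁻¹ := fun j => by
    rw [mul_one_div, mul_comm, ← div_div, div_self (hq j).ne', one_div]
    exact inv_anti₀ ha₀ (ha₀_le j)
  obtain ⟨B, hB⟩ := exists_tsum_tail_mul_sum_Icc_le (fun j => (hq j).le)
    (fun j => (one_div_pos.2 (haq j)).le) ((div_pos hz (hz.trans hzzs)).trans hzρ).le hρ₁
    (eventually_le_mul_of_tendsto_ratio hq hq_ratio hzρ) hcρ hqc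
  exact ⟨B, fun k _ => hB k⟩
end

section
/- Let (𝒬_i), (a_i) be positive sequences. The inequality λ ∑_{i=1}^∞ 𝒬_i (h_i − i h_1)^2 ≤ ∑_{i=1}^∞ a_i 𝒬_i 𝒬_1 (h_{i+1} − h_i − h_1)^2 holds for all real sequences h if and only if the Hardy inequality λ ∑_{i=1}^∞ 𝒬_{i+1} (∑_{j=1}^i f_j)^2 ≤ ∑_{i=1}^∞ a_i 𝒬_i 𝒬_1^{-1}·𝒬_1^2 f_i^2, i.e. λ ∑_{i=1}^∞ μ_i (∑_{j=1}^i f_j)^2 ≤ 𝒬_1 ∑_{i=1}^∞ ν_i f_i^2 with μ_i = 𝒬_{i+1}, ν_i = a_i 𝒬_i, holds for all real sequences f. -/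
/-!
The substitution `f_i = h_{i+1} - h_i - h_1` telescopes to `∑_{j ≤ i} f_j = h_{i+1} - (i + 1) h_1`,
which turns each side of the Becker–Döring inequality for `h` into the corresponding side of the
Hardy inequality for `f`; the `i = 1` term of the left-hand sum vanishes, which accounts for the
shift `𝒬_i ↦ 𝒬_{i+1}`. Every `f` arises this way (take `h_1 = 0` and `h` the partial sums of `f`),
and so does every `h`.
-/

open Finset

/-- Index `n` stands for the paper's `i = n + 1`; the sums live in `ℝ≥0∞`, so they always exist. -/
def BeckerDoringIneq (𝒬 a : ℕ → ℝ) (lam : ℝ) (h : ℕ → ℝ) : Prop :=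
  ENNReal.ofReal lam *
      ∑' i : ℕ, ENNReal.ofReal (𝒬 (i + 1) * (h (i + 1) - ((i : ℝ) + 1) * h 1) ^ 2) ≤
    ∑' i : ℕ, ENNReal.ofReal (a (i + 1) * 𝒬 (i + 1) * 𝒬 1 * (h (i + 2) - h (i + 1) - h 1) ^ 2)

def HardyIneq (𝒬 a : ℕ → ℝ) (lam : ℝ) (f : ℕ → ℝ) : Prop :=
  ENNReal.ofReal lam *
      ∑' i : ℕ, ENNReal.ofReal (𝒬 (i + 2) * (∑ j ∈ range (i + 1), f (j + 1)) ^ 2) ≤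
    ENNReal.ofReal (𝒬 1) * ∑' i : ℕ, ENNReal.ofReal (a (i + 1) * 𝒬 (i + 1) * f (i + 1) ^ 2)

section Substitution

variable {h f : ℕ → ℝ} (hf : ∀ i, f (i + 1) = h (i + 2) - h (i + 1) - h 1)
include hf

theorem sum_range_succ_eq_of_increments (i : ℕ) :
    ∑ j ∈ range (i + 1), f (j + 1) = h (i + 2) - ((i : ℝ) + 2) * h 1 := by
  induction i with
  | zero => rw [sum_range_one, hf]; push_cast; ring
  | succ i ih => rw [sum_range_succ, ih, hf]; push_cast; ring

theorem tsum_weighted_sq_eq_of_increments (𝒬 : ℕ → ℝ) :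
    ∑' i : ℕ, ENNReal.ofReal (𝒬 (i + 1) * (h (i + 1) - ((i : ℝ) + 1) * h 1) ^ 2) =
      ∑' i : ℕ, ENNReal.ofReal (𝒬 (i + 2) * (∑ j ∈ range (i + 1), f (j + 1)) ^ 2) := by
  rw [tsum_eq_zero_add' ENNReal.summable]
  have hzero : 𝒬 (0 + 1) * (h (0 + 1) - (((0 : ℕ) : ℝ) + 1) * h 1) ^ 2 = 0 := by simp
  rw [hzero, ENNReal.ofReal_zero, zero_add]
  refine tsum_congr fun i => ?_
  rw [sum_range_succ_eq_of_increments hf]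
  push_cast
  ring_nf

theorem ofReal_mul_tsum_eq_of_increments (𝒬 a : ℕ → ℝ) (h𝒬₁ : 0 ≤ 𝒬 1) :
    ENNReal.ofReal (𝒬 1) * ∑' i : ℕ, ENNReal.ofReal (a (i + 1) * 𝒬 (i + 1) * f (i + 1) ^ 2) =
      ∑' i : ℕ,
        ENNReal.ofReal (a (i + 1) * 𝒬 (i + 1) * 𝒬 1 * (h (i + 2) - h (i + 1) - h 1) ^ 2) := by
  rw [← ENNReal.tsum_mul_left]
  refine tsum_congr fun i => ?_
  rw [← ENNReal.ofReal_mul h𝒬₁, hf]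
  ring_nf

theorem beckerDoringIneq_iff_hardyIneq_of_increments (𝒬 a : ℕ → ℝ) (lam : ℝ) (h𝒬₁ : 0 ≤ 𝒬 1) :
    BeckerDoringIneq 𝒬 a lam h ↔ HardyIneq 𝒬 a lam f := by
  rw [BeckerDoringIneq, HardyIneq, tsum_weighted_sq_eq_of_increments hf,
    ofReal_mul_tsum_eq_of_increments hf 𝒬 a h𝒬₁]

end Substitution

theorem stmt_14_general (𝒬 a : ℕ → ℝ) (h𝒬 : ∀ i, 0 < 𝒬 i)
    (lam : ℝ) :
    (∀ h : ℕ → ℝ,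
      ENNReal.ofReal lam *
          ∑' i : ℕ, ENNReal.ofReal (𝒬 (i + 1) * (h (i + 1) - ((i : ℝ) + 1) * h 1) ^ 2) ≤
        ∑' i : ℕ,
          ENNReal.ofReal (a (i + 1) * 𝒬 (i + 1) * 𝒬 1 * (h (i + 2) - h (i + 1) - h 1) ^ 2))
    ↔
    (∀ f : ℕ → ℝ,
      ENNReal.ofReal lam *
          ∑' i : ℕ,
            ENNReal.ofReal (𝒬 (i + 2) * (∑ j ∈ Finset.range (i + 1), f (j + 1)) ^ 2) ≤
        ENNReal.ofReal (𝒬 1) *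
          ∑' i : ℕ, ENNReal.ofReal (a (i + 1) * 𝒬 (i + 1) * f (i + 1) ^ 2)) := by
  have h𝒬₁ := (h𝒬 1).le
  refine ⟨fun H f => ?_, fun H h => ?_⟩
  · let h : ℕ → ℝ := fun n => ∑ j ∈ range (n - 1), f (j + 1)
    have hf : ∀ i, f (i + 1) = h (i + 2) - h (i + 1) - h 1 := by simp [h, sum_range_succ]
    exact (beckerDoringIneq_iff_hardyIneq_of_increments hf 𝒬 a lam h𝒬₁).1 (H h)
  · let f : ℕ → ℝ := fun n => h (n + 1) - h n - h 1
    have hf : ∀ i, f (i + 1) = h (i + 2) - h (i + 1) - h 1 := fun _ => rfl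
    exact (beckerDoringIneq_iff_hardyIneq_of_increments hf 𝒬 a lam h𝒬₁).2 (H f)

/-- Equivalence of the Becker–Döring form inequality with a discrete Hardy inequality:
`λ ∑ 𝒬_i (h_i − i h_1)² ≤ ∑ a_i 𝒬_i 𝒬_1 (h_{i+1} − h_i − h_1)²` for all sequences `h`
iff `λ ∑ μ_i (∑_{j=1}^i f_j)² ≤ 𝒬_1 ∑ ν_i f_i²` for all sequences `f`, where
`μ_i = 𝒬_{i+1}` and `ν_i = a_i 𝒬_i`.
Sequences are indexed by `ℕ`, with index `n` corresponding to the paper's `i = n+1`;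
sums are taken in `ℝ≥0∞`. -/
theorem stmt_14 (𝒬 a : ℕ → ℝ) (h𝒬 : ∀ i, 0 < 𝒬 i) (ha : ∀ i, 0 < a i)
    (lam : ℝ) (hlam : 0 ≤ lam) :
    (∀ h : ℕ → ℝ,
      ENNReal.ofReal lam *
          ∑' i : ℕ, ENNReal.ofReal (𝒬 (i + 1) * (h (i + 1) - ((i : ℝ) + 1) * h 1) ^ 2) ≤
        ∑' i : ℕ,
          ENNReal.ofReal (a (i + 1) * 𝒬 (i + 1) * 𝒬 1 * (h (i + 2) - h (i + 1) - h 1) ^ 2))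
    ↔
    (∀ f : ℕ → ℝ,
      ENNReal.ofReal lam *
          ∑' i : ℕ,
            ENNReal.ofReal (𝒬 (i + 2) * (∑ j ∈ Finset.range (i + 1), f (j + 1)) ^ 2) ≤
        ENNReal.ofReal (𝒬 1) *
          ∑' i : ℕ, ENNReal.ofReal (a (i + 1) * 𝒬 (i + 1) * f (i + 1) ^ 2)) :=
  stmt_14_general 𝒬 a h𝒬 lam
end

section
/- Let (a_i), (b_i) be positive coefficient sequences, 0 < z ≤ z_s, 𝒬_i = Q_i z^i with Q_1 = 1 and Q_{i+1} = (a_i/b_{i+1}) Q_i, and 0 < η with ∑_i e^{2ηi} 𝒬_i < ∞. Define for compactly supported real sequences h the quadratic Becker–Döring nonlinearity Γ(h,h) by Γ_1(h,h) = −a_1 𝒬_1 h_1^2 − ∑_{i≥1} a_i 𝒬_i h_i h_1 and Γ_i(h,h) = b_i h_{i−1} h_1 − a_i 𝒬_1 h_i h_1 for i ≥ 2, and let σ_1 = 3a_1𝒬_1 + ∑_i a_i 𝒬_i, σ_i = a_i 𝒬_1 + b_i (i ≥ 2). Then there is a constant C > 0 depending only on (a_i), (b_i), z, η such that ∑_i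 e^{ηi} 𝒬_i |Γ_i(h,h)| ≤ C (∑_i e^{ηi} 𝒬_i |h_i|)(∑_i (1+σ_i) e^{ηi} 𝒬_i |h_i|). -/
open scoped BigOperators

/-- The quadratic Becker–Döring nonlinearity `Γ(h,h)`:
`Γ_1(h,h) = −a_1 𝒬_1 h_1² − ∑_{i≥1} a_i 𝒬_i h_i h_1` and
`Γ_i(h,h) = b_i h_{i−1} h_1 − a_i 𝒬_1 h_i h_1` for `i ≥ 2` (junk value `0` at `i = 0`). -/
noncomputable def BDGamma (a b 𝒬 h : ℕ → ℝ) : ℕ → ℝ := fun i =>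
  if i = 0 then 0
  else if i = 1 then
    -(a 1 * 𝒬 1 * h 1 ^ 2) - ∑' j : ℕ, a (j + 1) * 𝒬 (j + 1) * h (j + 1) * h 1
  else b i * h (i - 1) * h 1 - a i * 𝒬 1 * h i * h 1

/-- The weights `σ_1 = 3 a_1 𝒬_1 + ∑_{i≥1} a_i 𝒬_i` and `σ_i = a_i 𝒬_1 + b_i` for `i ≥ 2`. -/
noncomputable def BDsigma (a b 𝒬 : ℕ → ℝ) : ℕ → ℝ := fun i =>
  if i = 1 then 3 * a 1 * 𝒬 1 + ∑' j : ℕ, a (j + 1) * 𝒬 (j + 1)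
  else a i * 𝒬 1 + b i

/-- Bilinear estimate for the Becker–Döring nonlinear remainder in the weighted `ℓ¹` space
`X = ℓ¹(e^{ηi}𝒬_i)`: there is a constant `C > 0`, depending only on `(a_i)`, `(b_i)`, `z`
and `η`, such that `‖Γ(h,h)‖_X ≤ C ‖h‖_X ‖h‖_{X₁}` for every compactly supported
sequence `h`, where `X₁` carries the extra weight `(1 + σ_i)`.
Here `Q_1 = 1`, `Q_{i+1} = (a_i/b_{i+1}) Q_i`, `𝒬_i = Q_i z^i`, `0 < z`,
`∑ e^{2ηi} 𝒬_i < ∞` and `A := ∑ i²(1 + a_i + b_i)² 𝒬_i < ∞`.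
Indices: sums run over `i ≥ 1` via the shift `i = n + 1`. -/
theorem stmt_17 (a b Q : ℕ → ℝ) (ha : ∀ i, 1 ≤ i → 0 < a i) (hb : ∀ i, 2 ≤ i → 0 < b i)
    (z : ℝ) (hz : 0 < z)
    (hQ1 : Q 1 = 1) (hQrec : ∀ i : ℕ, 1 ≤ i → Q (i + 1) = a i / b (i + 1) * Q i)
    (𝒬 : ℕ → ℝ) (h𝒬 : ∀ i, 𝒬 i = Q i * z ^ i)
    (η : ℝ) (hη : 0 < η)
    (hsum : Summable fun i : ℕ => Real.exp (2 * η * ((i : ℝ) + 1)) * 𝒬 (i + 1))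
    (hA : Summable fun i : ℕ =>
      ((i : ℝ) + 1) ^ 2 * (1 + a (i + 1) + b (i + 1)) ^ 2 * 𝒬 (i + 1)) :
    ∃ C : ℝ, 0 < C ∧ ∀ h : ℕ → ℝ, (∃ N : ℕ, ∀ i, N ≤ i → h i = 0) →
      (∑' i : ℕ, Real.exp (η * ((i : ℝ) + 1)) * 𝒬 (i + 1) * |BDGamma a b 𝒬 h (i + 1)|) ≤
        C * (∑' i : ℕ, Real.exp (η * ((i : ℝ) + 1)) * 𝒬 (i + 1) * |h (i + 1)|) *
          (∑' i : ℕ,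
            (1 + BDsigma a b 𝒬 (i + 1)) * Real.exp (η * ((i : ℝ) + 1)) * 𝒬 (i + 1) *
              |h (i + 1)|) := by
  classical
  have hQpos : ∀ i, 1 ≤ i → 0 < Q i := by
    intro i hi
    induction i with
    | zero => exact absurd hi (by norm_num)
    | succ n ih =>
      rcases Nat.eq_zero_or_pos n with hn | hn
      · subst hn; rw [hQ1]; norm_num
      · rw [hQrec n hn]
        exact mul_pos (div_pos (ha n hn) (hb (n + 1) (by omega))) (ih hn)
  have h𝒬pos : ∀ i, 1 ≤ i → 0 < 𝒬 i := by
    intro i hi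
    rw [h𝒬]
    exact mul_pos (hQpos i hi) (pow_pos hz i)
  have h𝒬1 : 𝒬 1 = z := by rw [h𝒬, hQ1, pow_one, one_mul]
  have hdb : ∀ k : ℕ, b (k + 2) * 𝒬 (k + 2) = a (k + 1) * 𝒬 1 * 𝒬 (k + 1) := by
    intro k
    have hbp := hb (k + 2) (by omega)
    rw [h𝒬 (k + 2), h𝒬 (k + 1), h𝒬1, hQrec (k + 1) (by omega)]
    field_simp
    ring
  have hσ : ∀ i, 1 ≤ i → a i * 𝒬 1 ≤ BDsigma a b 𝒬 i := by
    intro i hi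
    unfold BDsigma
    split_ifs with h1
    · subst h1
      have ht : 0 ≤ ∑' j : ℕ, a (j + 1) * 𝒬 (j + 1) :=
        tsum_nonneg fun j =>
          le_of_lt (mul_pos (ha (j + 1) (by omega)) (h𝒬pos (j + 1) (by omega)))
      have hp : 0 < a 1 * 𝒬 1 := mul_pos (ha 1 le_rfl) (h𝒬pos 1 le_rfl)
      linarith
    · have h2 : 2 ≤ i := by omega
      linarith [hb i h2]
  have hσ1 : ∀ i, 1 ≤ i → a i * 𝒬 1 ≤ 1 + BDsigma a b 𝒬 i := by
    intro i hi; linarith [hσ i hi]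
  have hσ0 : ∀ i, 1 ≤ i → (0 : ℝ) ≤ 1 + BDsigma a b 𝒬 i := by
    intro i hi
    have hpos : 0 < a i * 𝒬 1 := mul_pos (ha i hi) (h𝒬pos 1 le_rfl)
    linarith [hσ i hi]
  refine ⟨(1 + 2 * Real.exp η) / (Real.exp η * z), ?_, ?_⟩
  · exact div_pos (by positivity) (mul_pos (Real.exp_pos η) hz)
  intro h hsupp
  obtain ⟨N0, hN0⟩ := hsupp
  obtain ⟨M, hM1, hNM⟩ : ∃ M : ℕ, 1 ≤ M ∧ max N0 2 = M + 1 :=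
    ⟨max N0 2 - 1, by omega, by omega⟩
  set N := max N0 2 with hNdef
  have hN2 : 2 ≤ N := le_max_right _ _
  have hN : ∀ i, N ≤ i → h i = 0 := fun i hi => hN0 i (le_trans (le_max_left _ _) hi)
  have hG2 : ∀ k : ℕ, BDGamma a b 𝒬 h (k + 2) =
      b (k + 2) * h (k + 1) * h 1 - a (k + 2) * 𝒬 1 * h (k + 2) * h 1 := by
    intro k
    simp [BDGamma]
  have hG1 : BDGamma a b 𝒬 h 1 =
      -(a 1 * 𝒬 1 * h 1 ^ 2) - ∑ j ∈ Finset.range N, a (j + 1) * 𝒬 (j + 1) * h (j + 1) * h 1 := by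
    have hg : BDGamma a b 𝒬 h 1 =
        -(a 1 * 𝒬 1 * h 1 ^ 2) - ∑' j : ℕ, a (j + 1) * 𝒬 (j + 1) * h (j + 1) * h 1 := by
      simp [BDGamma]
    rw [hg]
    congr 1
    refine tsum_eq_sum fun j hj => ?_
    have hj' : N ≤ j := by simpa [Finset.mem_range, not_lt] using hj
    rw [hN (j + 1) (by omega)]
    ring
  have hLsum : (∑' i : ℕ, Real.exp (η * ((i : ℝ) + 1)) * 𝒬 (i + 1) * |BDGamma a b 𝒬 h (i + 1)|)
      = ∑ i ∈ Finset.range N,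
          Real.exp (η * ((i : ℝ) + 1)) * 𝒬 (i + 1) * |BDGamma a b 𝒬 h (i + 1)| := by
    refine tsum_eq_sum fun i hi => ?_
    have hiN : N ≤ i := by simpa [Finset.mem_range, not_lt] using hi
    obtain ⟨k, rfl⟩ : ∃ k, i = k + 1 := ⟨i - 1, by omega⟩
    have h0 : BDGamma a b 𝒬 h (k + 1 + 1) = 0 := by
      rw [show k + 1 + 1 = k + 2 from rfl, hG2 k, hN (k + 1) (by omega), hN (k + 2) (by omega)]
      ring
    rw [h0, abs_zero, mul_zero]
  have hXsum : (∑' i : ℕ, Real.exp (η * ((i : ℝ) + 1)) * 𝒬 (i + 1) * |h (i + 1)|)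
      = ∑ i ∈ Finset.range N, Real.exp (η * ((i : ℝ) + 1)) * 𝒬 (i + 1) * |h (i + 1)| := by
    refine tsum_eq_sum fun i hi => ?_
    have hiN : N ≤ i := by simpa [Finset.mem_range, not_lt] using hi
    rw [hN (i + 1) (by omega), abs_zero, mul_zero]
  have hTsum : (∑' i : ℕ, (1 + BDsigma a b 𝒬 (i + 1)) * Real.exp (η * ((i : ℝ) + 1)) * 𝒬 (i + 1)
        * |h (i + 1)|)
      = ∑ i ∈ Finset.range N, (1 + BDsigma a b 𝒬 (i + 1)) * Real.exp (η * ((i : ℝ) + 1))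
          * 𝒬 (i + 1) * |h (i + 1)| := by
    refine tsum_eq_sum fun i hi => ?_
    have hiN : N ≤ i := by simpa [Finset.mem_range, not_lt] using hi
    rw [hN (i + 1) (by omega), abs_zero, mul_zero]
  rw [hLsum, hXsum, hTsum]
  set F : ℕ → ℝ :=
    fun i => Real.exp (η * ((i : ℝ) + 1)) * 𝒬 (i + 1) * |BDGamma a b 𝒬 h (i + 1)| with hF
  set G : ℕ → ℝ := fun i => Real.exp (η * ((i : ℝ) + 1)) * 𝒬 (i + 1) * |h (i + 1)| with hGdef
  set T : ℕ → ℝ :=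
    fun i => (1 + BDsigma a b 𝒬 (i + 1)) * Real.exp (η * ((i : ℝ) + 1)) * 𝒬 (i + 1) * |h (i + 1)|
    with hTdef
  have hTnn : ∀ i : ℕ, 0 ≤ T i := by
    intro i
    simp only [hTdef]
    have := hσ0 (i + 1) (by omega)
    have := (h𝒬pos (i + 1) (by omega)).le
    positivity
  have hGnn : ∀ i : ℕ, 0 ≤ G i := by
    intro i
    simp only [hGdef]
    have := (h𝒬pos (i + 1) (by omega)).le
    positivity
  have hSTnn : 0 ≤ ∑ i ∈ Finset.range N, T i := Finset.sum_nonneg fun i _ => hTnn i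
  have hSnn : 0 ≤ ∑ i ∈ Finset.range N, G i := Finset.sum_nonneg fun i _ => hGnn i
  -- bound for the i = 0 (cluster size 1) term
  have hbound0 : F 0 ≤ |h 1| * (T 0 + Real.exp η * ∑ j ∈ Finset.range N, T j) := by
    have habs : |BDGamma a b 𝒬 h 1| ≤ a 1 * 𝒬 1 * h 1 ^ 2
        + (∑ j ∈ Finset.range N, a (j + 1) * 𝒬 (j + 1) * |h (j + 1)|) * |h 1| := by
      rw [hG1]
      refine le_trans (abs_sub _ _) ?_
      gcongr
      · rw [abs_neg, abs_of_nonneg]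
        have := (h𝒬pos 1 le_rfl).le
        have := (ha 1 le_rfl).le
        positivity
      · calc |∑ j ∈ Finset.range N, a (j + 1) * 𝒬 (j + 1) * h (j + 1) * h 1|
            ≤ ∑ j ∈ Finset.range N, |a (j + 1) * 𝒬 (j + 1) * h (j + 1) * h 1| :=
              Finset.abs_sum_le_sum_abs _ _
          _ = ∑ j ∈ Finset.range N, a (j + 1) * 𝒬 (j + 1) * |h (j + 1)| * |h 1| := by
              refine Finset.sum_congr rfl fun j _ => ?_
              rw [abs_mul, abs_mul, abs_mul, abs_of_pos (ha (j + 1) (by omega)),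
                abs_of_pos (h𝒬pos (j + 1) (by omega))]
          _ = (∑ j ∈ Finset.range N, a (j + 1) * 𝒬 (j + 1) * |h (j + 1)|) * |h 1| := by
              rw [Finset.sum_mul]
    have h𝒬1nn := (h𝒬pos 1 le_rfl).le
    have hwnn : (0 : ℝ) ≤ Real.exp (η * (((0 : ℕ) : ℝ) + 1)) * 𝒬 (0 + 1) := by positivity
    have step1 : F 0 ≤ Real.exp (η * (((0 : ℕ) : ℝ) + 1)) * 𝒬 (0 + 1) *
        (a 1 * 𝒬 1 * h 1 ^ 2
          + (∑ j ∈ Finset.range N, a (j + 1) * 𝒬 (j + 1) * |h (j + 1)|) * |h 1|) := by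
      simp only [hF]
      exact mul_le_mul_of_nonneg_left habs hwnn
    refine le_trans step1 ?_
    have pieceA : Real.exp (η * (((0 : ℕ) : ℝ) + 1)) * 𝒬 (0 + 1) * (a 1 * 𝒬 1 * h 1 ^ 2)
        ≤ |h 1| * T 0 := by
      simp only [hTdef]
      have h1sq : h 1 ^ 2 = |h 1| * |h 1| := by
        rw [← abs_mul, ← sq, abs_of_nonneg (sq_nonneg _)]
      rw [h1sq]
      have hfac : a 1 * 𝒬 1 ≤ 1 + BDsigma a b 𝒬 (0 + 1) := hσ1 1 le_rfl
      have hrest : (0 : ℝ) ≤ Real.exp (η * (((0 : ℕ) : ℝ) + 1)) * 𝒬 (0 + 1) * (|h 1| * |h 1|) := by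
        positivity
      calc Real.exp (η * (((0 : ℕ) : ℝ) + 1)) * 𝒬 (0 + 1) * (a 1 * 𝒬 1 * (|h 1| * |h 1|))
          = a 1 * 𝒬 1 * (Real.exp (η * (((0 : ℕ) : ℝ) + 1)) * 𝒬 (0 + 1) * (|h 1| * |h 1|)) := by
            ring
        _ ≤ (1 + BDsigma a b 𝒬 (0 + 1)) *
              (Real.exp (η * (((0 : ℕ) : ℝ) + 1)) * 𝒬 (0 + 1) * (|h 1| * |h 1|)) :=
            mul_le_mul_of_nonneg_right hfac hrest
        _ = |h 1| * ((1 + BDsigma a b 𝒬 (0 + 1)) * Real.exp (η * (((0 : ℕ) : ℝ) + 1)) * 𝒬 (0 + 1)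
              * |h (0 + 1)|) := by ring
    have pieceB : Real.exp (η * (((0 : ℕ) : ℝ) + 1)) * 𝒬 (0 + 1)
        * ((∑ j ∈ Finset.range N, a (j + 1) * 𝒬 (j + 1) * |h (j + 1)|) * |h 1|)
        ≤ |h 1| * (Real.exp η * ∑ j ∈ Finset.range N, T j) := by
      have key : ∀ j ∈ Finset.range N, 𝒬 1 * (a (j + 1) * 𝒬 (j + 1) * |h (j + 1)|) ≤ T j := by
        intro j _
        simp only [hTdef]
        have h1le : (1 : ℝ) ≤ Real.exp (η * ((j : ℝ) + 1)) := by
          rw [Real.one_le_exp_iff]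
          positivity
        have hfac : a (j + 1) * 𝒬 1 ≤ 1 + BDsigma a b 𝒬 (j + 1) := hσ1 (j + 1) (by omega)
        have hq := (h𝒬pos (j + 1) (by omega)).le
        have ha' := (ha (j + 1) (by omega)).le
        calc 𝒬 1 * (a (j + 1) * 𝒬 (j + 1) * |h (j + 1)|)
            = (a (j + 1) * 𝒬 1) * (1 * (𝒬 (j + 1) * |h (j + 1)|)) := by ring
          _ ≤ (1 + BDsigma a b 𝒬 (j + 1)) *
                (Real.exp (η * ((j : ℝ) + 1)) * (𝒬 (j + 1) * |h (j + 1)|)) := by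
              have h1 : 0 ≤ a (j + 1) * 𝒬 1 := by positivity
              have h2 : 1 * (𝒬 (j + 1) * |h (j + 1)|)
                  ≤ Real.exp (η * ((j : ℝ) + 1)) * (𝒬 (j + 1) * |h (j + 1)|) := by
                apply mul_le_mul_of_nonneg_right h1le
                positivity
              exact mul_le_mul hfac h2 (by positivity) (le_trans h1 hfac)
          _ = (1 + BDsigma a b 𝒬 (j + 1)) * Real.exp (η * ((j : ℝ) + 1)) * 𝒬 (j + 1)
                * |h (j + 1)| := by ring
      have hsum_le : (∑ j ∈ Finset.range N, 𝒬 1 * (a (j + 1) * 𝒬 (j + 1) * |h (j + 1)|))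
          ≤ ∑ j ∈ Finset.range N, T j := Finset.sum_le_sum key
      have he : Real.exp (η * (((0 : ℕ) : ℝ) + 1)) = Real.exp η := by norm_num
      have expand : Real.exp η * 𝒬 1
            * ((∑ j ∈ Finset.range N, a (j + 1) * 𝒬 (j + 1) * |h (j + 1)|) * |h 1|)
          = |h 1| * (Real.exp η *
              ∑ j ∈ Finset.range N, 𝒬 1 * (a (j + 1) * 𝒬 (j + 1) * |h (j + 1)|)) := by
        simp only [Finset.mul_sum, Finset.sum_mul]
        refine Finset.sum_congr rfl fun j _ => ?_
        ring
      calc Real.exp (η * (((0 : ℕ) : ℝ) + 1)) * 𝒬 (0 + 1)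
            * ((∑ j ∈ Finset.range N, a (j + 1) * 𝒬 (j + 1) * |h (j + 1)|) * |h 1|)
          = Real.exp η * 𝒬 1
            * ((∑ j ∈ Finset.range N, a (j + 1) * 𝒬 (j + 1) * |h (j + 1)|) * |h 1|) := by
            norm_num
        _ = |h 1| * (Real.exp η *
              ∑ j ∈ Finset.range N, 𝒬 1 * (a (j + 1) * 𝒬 (j + 1) * |h (j + 1)|)) := expand
        _ ≤ |h 1| * (Real.exp η * ∑ j ∈ Finset.range N, T j) := by
            apply mul_le_mul_of_nonneg_left _ (abs_nonneg _)
            exact mul_le_mul_of_nonneg_left hsum_le (Real.exp_pos η).le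
    calc Real.exp (η * (((0 : ℕ) : ℝ) + 1)) * 𝒬 (0 + 1) *
          (a 1 * 𝒬 1 * h 1 ^ 2
            + (∑ j ∈ Finset.range N, a (j + 1) * 𝒬 (j + 1) * |h (j + 1)|) * |h 1|)
        = Real.exp (η * (((0 : ℕ) : ℝ) + 1)) * 𝒬 (0 + 1) * (a 1 * 𝒬 1 * h 1 ^ 2)
          + Real.exp (η * (((0 : ℕ) : ℝ) + 1)) * 𝒬 (0 + 1)
            * ((∑ j ∈ Finset.range N, a (j + 1) * 𝒬 (j + 1) * |h (j + 1)|) * |h 1|) :=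
          mul_add _ _ _
      _ ≤ |h 1| * T 0 + |h 1| * (Real.exp η * ∑ j ∈ Finset.range N, T j) :=
          add_le_add pieceA pieceB
      _ = |h 1| * (T 0 + Real.exp η * ∑ j ∈ Finset.range N, T j) := (mul_add _ _ _).symm
  -- bound for the terms of cluster size ≥ 2
  have hboundk : ∀ k : ℕ, F (k + 1) ≤ |h 1| * (Real.exp η * T k + T (k + 1)) := by
    intro k
    have hE : Real.exp (η * (((k + 1 : ℕ) : ℝ) + 1))
        = Real.exp η * Real.exp (η * ((k : ℝ) + 1)) := by
      rw [← Real.exp_add]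
      push_cast
      ring_nf
    have habs : |BDGamma a b 𝒬 h (k + 2)|
        ≤ b (k + 2) * |h (k + 1)| * |h 1| + a (k + 2) * 𝒬 1 * |h (k + 2)| * |h 1| := by
      rw [hG2 k]
      refine le_trans (abs_sub _ _) ?_
      gcongr
      · rw [abs_mul, abs_mul, abs_of_pos (hb (k + 2) (by omega))]
      · rw [abs_mul, abs_mul, abs_mul, abs_of_pos (ha (k + 2) (by omega)),
          abs_of_pos (h𝒬pos 1 le_rfl)]
    have hq2 := (h𝒬pos (k + 2) (by omega)).le
    have hq1 := (h𝒬pos (k + 1) (by omega)).le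
    have hwnn : (0 : ℝ) ≤ Real.exp (η * (((k + 1 : ℕ) : ℝ) + 1)) * 𝒬 (k + 1 + 1) := by
      positivity
    have step1 : F (k + 1) ≤ Real.exp (η * (((k + 1 : ℕ) : ℝ) + 1)) * 𝒬 (k + 1 + 1) *
        (b (k + 2) * |h (k + 1)| * |h 1| + a (k + 2) * 𝒬 1 * |h (k + 2)| * |h 1|) := by
      simp only [hF]
      exact mul_le_mul_of_nonneg_left (by exact_mod_cast habs) hwnn
    refine le_trans step1 ?_
    rw [mul_add]
    have piece1 : Real.exp (η * (((k + 1 : ℕ) : ℝ) + 1)) * 𝒬 (k + 1 + 1)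
        * (b (k + 2) * |h (k + 1)| * |h 1|) ≤ |h 1| * (Real.exp η * T k) := by
      simp only [hTdef]
      have hfac : a (k + 1) * 𝒬 1 ≤ 1 + BDsigma a b 𝒬 (k + 1) := hσ1 (k + 1) (by omega)
      have hrest : (0 : ℝ) ≤ Real.exp η * Real.exp (η * ((k : ℝ) + 1)) * 𝒬 (k + 1)
          * |h (k + 1)| * |h 1| := by positivity
      calc Real.exp (η * (((k + 1 : ℕ) : ℝ) + 1)) * 𝒬 (k + 1 + 1)
            * (b (k + 2) * |h (k + 1)| * |h 1|)
          = (b (k + 2) * 𝒬 (k + 2)) * (Real.exp η * Real.exp (η * ((k : ℝ) + 1))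
              * |h (k + 1)| * |h 1|) := by rw [hE]; ring_nf
        _ = (a (k + 1) * 𝒬 1) * (Real.exp η * Real.exp (η * ((k : ℝ) + 1)) * 𝒬 (k + 1)
              * |h (k + 1)| * |h 1|) := by rw [hdb k]; ring
        _ ≤ (1 + BDsigma a b 𝒬 (k + 1)) * (Real.exp η * Real.exp (η * ((k : ℝ) + 1)) * 𝒬 (k + 1)
              * |h (k + 1)| * |h 1|) := mul_le_mul_of_nonneg_right hfac hrest
        _ = |h 1| * (Real.exp η * ((1 + BDsigma a b 𝒬 (k + 1)) * Real.exp (η * ((k : ℝ) + 1))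
              * 𝒬 (k + 1) * |h (k + 1)|)) := by ring
    have piece2 : Real.exp (η * (((k + 1 : ℕ) : ℝ) + 1)) * 𝒬 (k + 1 + 1)
        * (a (k + 2) * 𝒬 1 * |h (k + 2)| * |h 1|) ≤ |h 1| * T (k + 1) := by
      simp only [hTdef]
      have hfac : a (k + 2) * 𝒬 1 ≤ 1 + BDsigma a b 𝒬 (k + 2) := hσ1 (k + 2) (by omega)
      have hrest : (0 : ℝ) ≤ Real.exp (η * (((k + 1 : ℕ) : ℝ) + 1)) * 𝒬 (k + 2)
          * |h (k + 2)| * |h 1| := by positivity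
      calc Real.exp (η * (((k + 1 : ℕ) : ℝ) + 1)) * 𝒬 (k + 1 + 1)
            * (a (k + 2) * 𝒬 1 * |h (k + 2)| * |h 1|)
          = (a (k + 2) * 𝒬 1) * (Real.exp (η * (((k + 1 : ℕ) : ℝ) + 1)) * 𝒬 (k + 2)
              * |h (k + 2)| * |h 1|) := by ring_nf
        _ ≤ (1 + BDsigma a b 𝒬 (k + 2)) * (Real.exp (η * (((k + 1 : ℕ) : ℝ) + 1)) * 𝒬 (k + 2)
              * |h (k + 2)| * |h 1|) := mul_le_mul_of_nonneg_right hfac hrest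
        _ = |h 1| * ((1 + BDsigma a b 𝒬 (k + 1 + 1)) * Real.exp (η * (((k + 1 : ℕ) : ℝ) + 1))
              * 𝒬 (k + 1 + 1) * |h (k + 1 + 1)|) := by ring_nf
    calc Real.exp (η * (((k + 1 : ℕ) : ℝ) + 1)) * 𝒬 (k + 1 + 1)
          * (b (k + 2) * |h (k + 1)| * |h 1|)
        + Real.exp (η * (((k + 1 : ℕ) : ℝ) + 1)) * 𝒬 (k + 1 + 1)
          * (a (k + 2) * 𝒬 1 * |h (k + 2)| * |h 1|)
        ≤ |h 1| * (Real.exp η * T k) + |h 1| * T (k + 1) := add_le_add piece1 piece2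
      _ = |h 1| * (Real.exp η * T k + T (k + 1)) := by ring
  -- combine
  have hsubset : Finset.range M ⊆ Finset.range N := Finset.range_subset_range.mpr (by omega)
  have hsplitT : (∑ k ∈ Finset.range M, T (k + 1)) + T 0 = ∑ i ∈ Finset.range N, T i := by
    rw [hNM]
    exact (Finset.sum_range_succ' T M).symm
  have hMle : (∑ k ∈ Finset.range M, T k) ≤ ∑ i ∈ Finset.range N, T i :=
    Finset.sum_le_sum_of_subset_of_nonneg hsubset fun i _ _ => hTnn i
  have hmain : (∑ i ∈ Finset.range N, F i)
      ≤ (1 + 2 * Real.exp η) * |h 1| * ∑ i ∈ Finset.range N, T i := by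
    have hdecomp : (∑ i ∈ Finset.range N, F i)
        = (∑ k ∈ Finset.range M, F (k + 1)) + F 0 := by
      rw [hNM]
      exact Finset.sum_range_succ' F M
    rw [hdecomp]
    have hsum1 : (∑ k ∈ Finset.range M, F (k + 1))
        ≤ ∑ k ∈ Finset.range M, |h 1| * (Real.exp η * T k + T (k + 1)) :=
      Finset.sum_le_sum fun k _ => hboundk k
    have hsum2 : (∑ k ∈ Finset.range M, |h 1| * (Real.exp η * T k + T (k + 1)))
        = (|h 1| * Real.exp η) * (∑ k ∈ Finset.range M, T k)
          + |h 1| * (∑ k ∈ Finset.range M, T (k + 1)) := by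
      rw [Finset.mul_sum, Finset.mul_sum, ← Finset.sum_add_distrib]
      refine Finset.sum_congr rfl fun k _ => ?_
      ring
    have e1 : (|h 1| * Real.exp η) * (∑ k ∈ Finset.range M, T k)
        ≤ (|h 1| * Real.exp η) * ∑ i ∈ Finset.range N, T i :=
      mul_le_mul_of_nonneg_left hMle (by positivity)
    have e2 : |h 1| * (∑ k ∈ Finset.range M, T (k + 1)) + |h 1| * T 0
        = |h 1| * ∑ i ∈ Finset.range N, T i := by
      rw [← mul_add, hsplitT]
    have e3 : |h 1| * (T 0 + Real.exp η * ∑ j ∈ Finset.range N, T j)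
        = |h 1| * T 0 + (|h 1| * Real.exp η) * ∑ j ∈ Finset.range N, T j := by ring
    have := add_le_add (le_trans hsum1 (le_of_eq hsum2)) hbound0
    rw [e3] at this
    calc (∑ k ∈ Finset.range M, F (k + 1)) + F 0
        ≤ (|h 1| * Real.exp η) * (∑ k ∈ Finset.range M, T k)
          + |h 1| * (∑ k ∈ Finset.range M, T (k + 1))
          + (|h 1| * T 0 + (|h 1| * Real.exp η) * ∑ j ∈ Finset.range N, T j) := this
      _ ≤ (|h 1| * Real.exp η) * (∑ i ∈ Finset.range N, T i)
          + |h 1| * (∑ i ∈ Finset.range N, T i)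
          + (|h 1| * Real.exp η) * (∑ i ∈ Finset.range N, T i) := by
          linarith [e1, e2]
      _ = (1 + 2 * Real.exp η) * |h 1| * ∑ i ∈ Finset.range N, T i := by ring
  -- control |h 1| by the X-norm
  have hh1 : Real.exp η * z * |h 1| ≤ ∑ i ∈ Finset.range N, G i := by
    have h0 : G 0 = Real.exp η * z * |h 1| := by
      simp only [hGdef]
      rw [show (0 : ℕ) + 1 = 1 from rfl, h𝒬1]
      norm_num
    calc Real.exp η * z * |h 1| = G 0 := h0.symm
      _ ≤ ∑ i ∈ Finset.range N, G i :=
        Finset.single_le_sum (fun i _ => hGnn i) (Finset.mem_range.mpr (by omega))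
  have hfinal : (1 + 2 * Real.exp η) * |h 1|
      ≤ (1 + 2 * Real.exp η) / (Real.exp η * z) * ∑ i ∈ Finset.range N, G i := by
    rw [div_mul_eq_mul_div, le_div_iff₀ (mul_pos (Real.exp_pos η) hz)]
    calc (1 + 2 * Real.exp η) * |h 1| * (Real.exp η * z)
        = (1 + 2 * Real.exp η) * (Real.exp η * z * |h 1|) := by ring
      _ ≤ (1 + 2 * Real.exp η) * ∑ i ∈ Finset.range N, G i :=
        mul_le_mul_of_nonneg_left hh1 (by positivity)
  calc (∑ i ∈ Finset.range N, F i)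
      ≤ (1 + 2 * Real.exp η) * |h 1| * ∑ i ∈ Finset.range N, T i := hmain
    _ ≤ (1 + 2 * Real.exp η) / (Real.exp η * z) * (∑ i ∈ Finset.range N, G i)
        * ∑ i ∈ Finset.range N, T i := mul_le_mul_of_nonneg_right hfinal hSTnn
end
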